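/- The monomials v^i u^j, for (i, j) ranging over ℕ × ℕ, form a ℂ-vector space basis of the algebraic Toeplitz algebra T_alg; that is, the family (v^i u^j)_{(i,j)∈ℕ×ℕ} is linearly independent over ℂ and spans T_alg. -/

import Mathlib

/-- The defining relation of the algebraic Toeplitz algebra: `U * V = 1`,
where `U = ι false` and `V = ι true` are the two generators of the free algebra. -/
inductive ToeplitzRel : FreeAlgebra ℂ Bool → FreeAlgebra ℂ Bool → Prop
  | rel : ToeplitzRel (FreeAlgebra.ι ℂ false * FreeAlgebra.ι ℂ true) 1

/-- The algebraic Toeplitz algebra: the quotient of the free `ℂ`-algebra on two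
generators `U, V` by the two-sided ideal generated by `U * V - 1`. -/
abbrev Talg : Type := RingQuot ToeplitzRel

/-- The image `u` of the generator `U` in the algebraic Toeplitz algebra. -/
noncomputable def Tu : Talg := RingQuot.mkAlgHom ℂ ToeplitzRel (FreeAlgebra.ι ℂ false)

/-- The image `v` of the generator `V` in the algebraic Toeplitz algebra. -/
noncomputable def Tv : Talg := RingQuot.mkAlgHom ℂ ToeplitzRel (FreeAlgebra.ι ℂ true)

/-!
The monomials are closed under multiplication, since `u^j v^k = v^(k-j) u^(j-k)`, and contain
the generators, so they span. For independence, let `T_alg` act on `ℕ →₀ ℂ` with `u` the backward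
and `v` the forward shift. The map `x ↦ x - v x u` sends `v^i u^j` to `v^i (1 - v u) u^j`, which
acts as the matrix unit `e_j ↦ e_i`; its matrix coefficients are therefore a family of linear
forms dual to the monomials.
-/

open Finsupp

section Monoid

variable {M : Type*} [Monoid M] {a b : M}

lemma pow_mul_pow_of_mul_eq_one (h : a * b = 1) (j k : ℕ) :
    a ^ j * b ^ k = b ^ (k - j) * a ^ (j - k) := by
  induction j generalizing k with
  | zero => simp
  | succ j ih =>
    cases k with
    | zero => simp
    | succ k =>
      rw [pow_succ, pow_succ', mul_assoc, ← mul_assoc a, h, one_mul, ih]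
      simp only [Nat.add_sub_add_right]

lemma pow_mul_pow_mul_pow_mul_pow_of_mul_eq_one (h : a * b = 1) (i j k l : ℕ) :
    b ^ i * a ^ j * (b ^ k * a ^ l) = b ^ (i + (k - j)) * a ^ (j - k + l) := by
  rw [pow_add, pow_add, mul_assoc, ← mul_assoc (a ^ j), pow_mul_pow_of_mul_eq_one h]
  simp only [mul_assoc]

def Submonoid.powMulPow (h : a * b = 1) : Submonoid M where
  carrier := Set.range fun ij : ℕ × ℕ => b ^ ij.1 * a ^ ij.2
  mul_mem' := by
    rintro _ _ ⟨⟨i, j⟩, rfl⟩ ⟨⟨k, l⟩, rfl⟩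
    exact ⟨(i + (k - j), j - k + l), (pow_mul_pow_mul_pow_mul_pow_of_mul_eq_one h i j k l).symm⟩
  one_mem' := ⟨(0, 0), by simp⟩

lemma Submonoid.closure_pair_le_powMulPow (h : a * b = 1) :
    Submonoid.closure {a, b} ≤ Submonoid.powMulPow h := by
  rw [Submonoid.closure_le]
  rintro _ (rfl | rfl)
  · exact ⟨(0, 1), by simp⟩
  · exact ⟨(1, 0), by simp⟩

end Monoid

lemma Tu_mul_Tv : Tu * Tv = 1 := by
  rw [Tu, Tv, ← map_mul, ← map_one (RingQuot.mkAlgHom ℂ ToeplitzRel)]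
  exact RingQuot.mkAlgHom_rel ℂ ToeplitzRel.rel

lemma adjoin_Tu_Tv : Algebra.adjoin ℂ {Tu, Tv} = ⊤ := by
  have hgen : ({Tu, Tv} : Set Talg) =
      RingQuot.mkAlgHom ℂ ToeplitzRel '' Set.range (FreeAlgebra.ι ℂ) := by
    rw [← Set.range_comp]
    ext x
    simp [Tu, Tv]
  rw [hgen, Algebra.adjoin_image, FreeAlgebra.adjoin_range_ι, Algebra.map_top,
    AlgHom.range_eq_top]
  exact RingQuot.mkAlgHom_surjective ℂ ToeplitzRel

lemma span_Tv_pow_mul_Tu_pow :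
    Submodule.span ℂ (Set.range fun ij : ℕ × ℕ => Tv ^ ij.1 * Tu ^ ij.2) = ⊤ := by
  rw [eq_top_iff, ← Algebra.top_toSubmodule, ← adjoin_Tu_Tv, Algebra.adjoin_eq_span]
  exact Submodule.span_mono (Submonoid.closure_pair_le_powMulPow Tu_mul_Tv)

noncomputable def downShift : Module.End ℂ (ℕ →₀ ℂ) := lcomapDomain Nat.succ Nat.succ_injective

noncomputable def upShift : Module.End ℂ (ℕ →₀ ℂ) := lmapDomain ℂ ℂ Nat.succ

lemma downShift_mul_upShift : downShift * upShift = 1 :=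
  LinearMap.ext (leftInverse_lcomapDomain_mapDomain (R := ℂ) _ Nat.succ_injective)

lemma upShift_pow_single (i n : ℕ) (c : ℂ) : (upShift ^ i) (single n c) = single (n + i) c := by
  induction i with
  | zero => simp
  | succ i ih => rw [pow_succ', Module.End.mul_apply, ih]; simp [upShift, add_assoc]

lemma downShift_pow_single (j n : ℕ) (c : ℂ) :
    (downShift ^ j) (single n c) = if j ≤ n then single (n - j) c else 0 := by
  induction j generalizing n with
  | zero => simp
  | succ j ih =>
    rw [pow_succ, Module.End.mul_apply]
    cases n with
    | zero => simp [downShift, comapDomain_single_of_not_mem_range]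
    | succ n =>
      rw [downShift, lcomapDomain_apply, comapDomain_single, ← downShift, ih]
      simp

noncomputable def shiftRep : Talg →ₐ[ℂ] Module.End ℂ (ℕ →₀ ℂ) :=
  RingQuot.liftAlgHom ℂ ⟨FreeAlgebra.lift ℂ (fun b => bif b then upShift else downShift), by
    rintro _ _ ⟨⟩
    simp [downShift_mul_upShift]⟩

lemma shiftRep_Tv_pow_mul_Tu_pow_single (i j n : ℕ) (c : ℂ) :
    shiftRep (Tv ^ i * Tu ^ j) (single n c) = if j ≤ n then single (n - j + i) c else 0 := by
  have hu : shiftRep Tu = downShift := by simp [shiftRep, Tu, RingQuot.liftAlgHom_mkAlgHom_apply]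
  have hv : shiftRep Tv = upShift := by simp [shiftRep, Tv, RingQuot.liftAlgHom_mkAlgHom_apply]
  rw [map_mul, map_pow, map_pow, hu, hv, Module.End.mul_apply, downShift_pow_single]
  split_ifs
  · exact upShift_pow_single i (n - j) c
  · exact map_zero _

noncomputable def toeplitzCoeff (ij : ℕ × ℕ) : Module.Dual ℂ Talg :=
  lapply ij.1 ∘ₗ LinearMap.applyₗ (single ij.2 1) ∘ₗ shiftRep.toLinearMap ∘ₗ
    (LinearMap.id - LinearMap.mulLeft ℂ Tv ∘ₗ LinearMap.mulRight ℂ Tu)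

lemma toeplitzCoeff_Tv_pow_mul_Tu_pow (ij kl : ℕ × ℕ) :
    toeplitzCoeff ij (Tv ^ kl.1 * Tu ^ kl.2) = if kl = ij then 1 else 0 := by
  obtain ⟨i, j⟩ := ij
  obtain ⟨k, l⟩ := kl
  have hshift : Tv * (Tv ^ k * Tu ^ l * Tu) = Tv ^ (k + 1) * Tu ^ (l + 1) := by
    rw [pow_succ', pow_succ]; simp only [mul_assoc]
  simp only [toeplitzCoeff, LinearMap.comp_apply, LinearMap.sub_apply, LinearMap.id_apply,
    LinearMap.mulLeft_apply, LinearMap.mulRight_apply, hshift, AlgHom.toLinearMap_apply,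
    map_sub, LinearMap.applyₗ_apply_apply, shiftRep_Tv_pow_mul_Tu_pow_single, lapply_apply,
    apply_ite (fun f : ℕ →₀ ℂ => f i), single_apply, Finsupp.zero_apply, Prod.mk.injEq]
  split_ifs <;> first | omega | simp

theorem linearIndependent_Tv_pow_mul_Tu_pow :
    LinearIndependent ℂ (fun ij : ℕ × ℕ => Tv ^ ij.1 * Tu ^ ij.2) :=
  LinearIndependent.of_pairwise_dual_eq_zero_one _ toeplitzCoeff
    (fun _ _ h => by simp [toeplitzCoeff_Tv_pow_mul_Tu_pow, Ne.symm h])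
    (fun _ => by simp [toeplitzCoeff_Tv_pow_mul_Tu_pow])

/-- The monomials `v^i * u^j`, `(i,j) ∈ ℕ × ℕ`, form a `ℂ`-vector space basis of the
algebraic Toeplitz algebra: they are linearly independent and span the whole algebra. -/
theorem stmt1 :
    LinearIndependent ℂ (fun ij : ℕ × ℕ => Tv ^ ij.1 * Tu ^ ij.2) ∧
    Submodule.span ℂ (Set.range fun ij : ℕ × ℕ => Tv ^ ij.1 * Tu ^ ij.2) = ⊤ :=
  ⟨linearIndependent_Tv_pow_mul_Tu_pow, span_Tv_pow_mul_Tu_pow⟩
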